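/- In the heterogeneous random graph G_n(α,β,W), the second moments of the degree-normalized single- and double-edge triangle terms satisfy E[(∑_{i<j<k} Ā_{ij} μ_{jk} μ_{ki}/(μ_i μ_j μ_k))²] = Θ(p_n/(n p_n)²) and E[(∑_{i<j<k} Ā_{ij} Ā_{jk} μ_{ki}/(μ_i μ_j μ_k))²] = Θ(p_n/(n p_n)³), where each Θ bound holds with positive constants uniform over n and admissible weight arrays. -/

import Mathlib

open MeasureTheory ProbabilityTheory Filter Finset Topology

noncomputable section

namespace HetRG

/-- The edge-probability scale `p_n = n^{-α}`. -/
def pn (α : ℝ) (n : ℕ) : ℝ := (n : ℝ) ^ (-α)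

/-- `δ_n = (log (n p_n))^{-2}`. -/
def deltan (α : ℝ) (n : ℕ) : ℝ := (Real.log ((n : ℝ) * pn α n) ^ 2)⁻¹

/-- The heterogeneous Erdős–Rényi random graph `G_n(α, β, W)`: `A` is a symmetric
random 0-1 adjacency matrix with zero diagonal, the entries `A i j` for `i < j` are
independent Bernoulli with success probability `μ_{ij} = p_n * w i j`, where the
symmetric weight array `w` has zero diagonal and off-diagonal entries in `[β, 1]`. -/
structure IsHetRG (α β : ℝ) {Ω : Type} [MeasureSpace Ω] (n : ℕ)
    (w : Fin n → Fin n → ℝ) (A : Fin n → Fin n → Ω → ℝ) : Prop where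
  isProb : IsProbabilityMeasure (volume : Measure Ω)
  meas : ∀ i j, Measurable (A i j)
  wSymm : ∀ i j, w i j = w j i
  wDiag : ∀ i, w i i = 0
  wMem : ∀ i j, i ≠ j → w i j ∈ Set.Icc β 1
  aSymm : ∀ i j, A i j = A j i
  aDiag : ∀ i ω, A i i ω = 0
  aVal : ∀ i j ω, A i j ω = 0 ∨ A i j ω = 1
  aBern : ∀ i j, i ≠ j → volume {ω | A i j ω = 1} = ENNReal.ofReal (pn α n * w i j)
  aIndep : iIndepFun
      (fun p : {p : Fin n × Fin n // p.1 < p.2} => A p.1.1 p.1.2) volume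

variable {Ω : Type} [MeasureSpace Ω]

/-- `μ_{ij} = p_n w_{ij}`. -/
def muij (α : ℝ) {n : ℕ} (w : Fin n → Fin n → ℝ) (i j : Fin n) : ℝ := pn α n * w i j

/-- `μ_i = ∑_j μ_{ij}`. -/
def mui (α : ℝ) {n : ℕ} (w : Fin n → Fin n → ℝ) (i : Fin n) : ℝ := ∑ j, muij α w i j

/-- The degree `d_i = ∑_j A_{ij}`. -/
def deg {n : ℕ} (A : Fin n → Fin n → Ω → ℝ) (i : Fin n) (ω : Ω) : ℝ := ∑ j, A i j ω

/-- The centered entry `Ā_{ij} = A_{ij} - μ_{ij}`. -/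
def abar (α : ℝ) {n : ℕ} (w : Fin n → Fin n → ℝ) (A : Fin n → Fin n → Ω → ℝ)
    (i j : Fin n) (ω : Ω) : ℝ := A i j ω - muij α w i j

/-- `t_i = ∑_{j ≠ k} A_{ij} A_{jk} A_{ki}`. -/
def tri {n : ℕ} (A : Fin n → Fin n → Ω → ℝ) (i : Fin n) (ω : Ω) : ℝ :=
  ∑ j, ∑ k, if j ≠ k then A i j ω * A j k ω * A k i ω else 0

/-- `∑_{j ≠ k} A_{ij} A_{ik}`, the denominator in the clustering coefficient. -/
def wedge {n : ℕ} (A : Fin n → Fin n → Ω → ℝ) (i : Fin n) (ω : Ω) : ℝ :=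
  ∑ j, ∑ k, if j ≠ k then A i j ω * A i k ω else 0

/-- The average clustering coefficient `C̄_n` (summands with zero denominator are zero,
by the junk-value convention `x / 0 = 0`). -/
def clust {n : ℕ} (A : Fin n → Fin n → Ω → ℝ) (ω : Ω) : ℝ :=
  (n : ℝ)⁻¹ * ∑ i, tri A i ω / wedge A i ω

/-- `a_i = E[1/(d_i (d_i - 1))]`, with the convention that the integrand is `0`
when `d_i ∈ {0, 1}` (junk value `0⁻¹ = 0`). -/
def ai {n : ℕ} (A : Fin n → Fin n → Ω → ℝ) (i : Fin n) : ℝ :=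
  ∫ ω, (deg A i ω * (deg A i ω - 1))⁻¹

/-- `E[t_i]`. -/
def Etri {n : ℕ} (A : Fin n → Fin n → Ω → ℝ) (i : Fin n) : ℝ := ∫ ω, tri A i ω

/-- `b_i = E[t_i] (2μ_i - 1) / (μ_i² (μ_i - 1)²)`. -/
def bi (α : ℝ) {n : ℕ} (w : Fin n → Fin n → ℝ) (A : Fin n → Fin n → Ω → ℝ) (i : Fin n) : ℝ :=
  Etri A i * (2 * mui α w i - 1) / (mui α w i ^ 2 * (mui α w i - 1) ^ 2)

/-- `c_{ij} = ∑_{k ≠ i,j} a_k μ_{ki} μ_{kj}`. -/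
def cij (α : ℝ) {n : ℕ} (w : Fin n → Fin n → ℝ) (A : Fin n → Fin n → Ω → ℝ)
    (i j : Fin n) : ℝ :=
  ∑ k, if k ≠ i ∧ k ≠ j then ai A k * muij α w k i * muij α w k j else 0

/-- `d_{ij} = ∑_{k ≠ i,j} μ_{ki} μ_{kj}`. -/
def dij (α : ℝ) {n : ℕ} (w : Fin n → Fin n → ℝ) (i j : Fin n) : ℝ :=
  ∑ k, if k ≠ i ∧ k ≠ j then muij α w k i * muij α w k j else 0

/-- `e_{ij} = 2 c_{ij} + 2 (a_i d_{ij} + a_j d_{ji}) - b_i - b_j`. -/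
def eij (α : ℝ) {n : ℕ} (w : Fin n → Fin n → ℝ) (A : Fin n → Fin n → Ω → ℝ)
    (i j : Fin n) : ℝ :=
  2 * cij α w A i j + 2 * (ai A i * dij α w i j + ai A j * dij α w j i)
    - bi α w A i - bi α w A j

/-- `a_{ijk} = a_i + a_j + a_k`. -/
def aijk {n : ℕ} (A : Fin n → Fin n → Ω → ℝ) (i j k : Fin n) : ℝ := ai A i + ai A j + ai A k

/-- `σ_{1n}² = (4/n²) ∑_{i<j<k} a_{ijk}² μ_{ij}(1-μ_{ij}) μ_{jk}(1-μ_{jk}) μ_{ki}(1-μ_{ki})`. -/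
def sigma1sq (α : ℝ) {n : ℕ} (w : Fin n → Fin n → ℝ) (A : Fin n → Fin n → Ω → ℝ) : ℝ :=
  4 / (n : ℝ) ^ 2 * ∑ i, ∑ j, ∑ k, if i < j ∧ j < k then
    aijk A i j k ^ 2 * (muij α w i j * (1 - muij α w i j)) *
      (muij α w j k * (1 - muij α w j k)) * (muij α w k i * (1 - muij α w k i)) else 0

/-- `σ_{2n}² = (4/n²) ∑_{i<j} e_{ij}² μ_{ij}(1-μ_{ij})`. -/
def sigma2sq (α : ℝ) {n : ℕ} (w : Fin n → Fin n → ℝ) (A : Fin n → Fin n → Ω → ℝ) : ℝ :=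
  4 / (n : ℝ) ^ 2 * ∑ i, ∑ j, if i < j then
    eij α w A i j ^ 2 * (muij α w i j * (1 - muij α w i j)) else 0

/-- The sum of weighted triangles `T_n = ∑_{i<j<k} A_{ij}A_{jk}A_{ki}/(d_i d_j d_k)`
(summands with zero denominator are zero by the junk-value convention). -/
def Tn {n : ℕ} (A : Fin n → Fin n → Ω → ℝ) (ω : Ω) : ℝ :=
  ∑ i, ∑ j, ∑ k, if i < j ∧ j < k then
    A i j ω * A j k ω * A k i ω / (deg A i ω * deg A j ω * deg A k ω) else 0

/-- `η_i = ∑_{j ≠ k} μ_{ij} μ_{jk} μ_{ki} / (μ_i² μ_j μ_k)`. -/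
def etai (α : ℝ) {n : ℕ} (w : Fin n → Fin n → ℝ) (i : Fin n) : ℝ :=
  ∑ j, ∑ k, if j ≠ k then
    muij α w i j * muij α w j k * muij α w k i /
      (mui α w i ^ 2 * mui α w j * mui α w k) else 0

/-- `γ_{ij} = ∑_{k ∉ {i,j}} μ_{jk} μ_{ki} / (μ_i μ_j μ_k)`. -/
def gammaij (α : ℝ) {n : ℕ} (w : Fin n → Fin n → ℝ) (i j : Fin n) : ℝ :=
  ∑ k, if k ≠ i ∧ k ≠ j then
    muij α w j k * muij α w k i / (mui α w i * mui α w j * mui α w k) else 0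

/-- `v_{1n}² = ∑_{i<j<k} μ_{ij}(1-μ_{ij}) μ_{jk}(1-μ_{jk}) μ_{ki}(1-μ_{ki}) / (μ_i² μ_j² μ_k²)`. -/
def v1sq (α : ℝ) {n : ℕ} (w : Fin n → Fin n → ℝ) : ℝ :=
  ∑ i, ∑ j, ∑ k, if i < j ∧ j < k then
    muij α w i j * (1 - muij α w i j) * (muij α w j k * (1 - muij α w j k)) *
      (muij α w k i * (1 - muij α w k i)) /
      (mui α w i ^ 2 * mui α w j ^ 2 * mui α w k ^ 2) else 0

/-- `v_{2n}² = ∑_{i<j} (γ_{ij} - (η_i + η_j)/2)² μ_{ij}(1-μ_{ij})`. -/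
def v2sq (α : ℝ) {n : ℕ} (w : Fin n → Fin n → ℝ) : ℝ :=
  ∑ i, ∑ j, if i < j then
    (gammaij α w i j - (etai α w i + etai α w j) / 2) ^ 2 *
      (muij α w i j * (1 - muij α w i j)) else 0

/-- Convergence in distribution to the standard normal law `N(0,1)`, phrased as
pointwise convergence of the CDFs (every point is a continuity point of the
standard Gaussian CDF). -/
def CDFTendstoGaussian (X : ℕ → Ω → ℝ) : Prop :=
  ∀ x : ℝ, Tendsto (fun n => (volume {ω | X n ω ≤ x}).toReal) atTop
    (𝓝 ((gaussianReal 0 1 (Set.Iic x)).toReal))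

/-- `X_n = o_P(r_n)`: `X_n / r_n → 0` in probability. -/
def IsoP (X : ℕ → Ω → ℝ) (r : ℕ → ℝ) : Prop :=
  ∀ ε : ℝ, 0 < ε →
    Tendsto (fun n => (volume {ω | ε * |r n| < |X n ω|}).toReal) atTop (𝓝 0)

/-- The Erdős–Rényi weight array: all off-diagonal weights equal to `c`. -/
def wER (c : ℝ) (n : ℕ) : Fin n → Fin n → ℝ := fun i j => if i = j then 0 else c

/-- The rank-1 weight array `w_{ij} = w_i w_j` (zero on the diagonal). -/
def wRank1 {n : ℕ} (v : Fin n → ℝ) : Fin n → Fin n → ℝ :=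
  fun i j => if i = j then 0 else v i * v j

section Aux

variable {α β : ℝ} {Ω : Type} [MeasureSpace Ω] {n : ℕ}
  {w : Fin n → Fin n → ℝ} {A : Fin n → Fin n → Ω → ℝ}

lemma pn_pos (α : ℝ) (hn : 0 < n) : 0 < pn α n :=
  Real.rpow_pos_of_pos (by exact_mod_cast hn) _

lemma pn_nonneg (α : ℝ) (n : ℕ) : 0 ≤ pn α n :=
  Real.rpow_nonneg (Nat.cast_nonneg n) _

namespace IsHetRG

variable (h : IsHetRG α β n w A)
include h

lemma w_nonneg (hβ : 0 < β) (i j : Fin n) : 0 ≤ w i j := by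
  rcases eq_or_ne i j with rfl | hij
  · simp [h.wDiag]
  · exact le_trans hβ.le (h.wMem i j hij).1

lemma w_le_one (i j : Fin n) : w i j ≤ 1 := by
  rcases eq_or_ne i j with rfl | hij
  · simp [h.wDiag]
  · exact (h.wMem i j hij).2

lemma muij_nonneg (hβ : 0 < β) (i j : Fin n) : 0 ≤ muij α w i j :=
  mul_nonneg (pn_nonneg α n) (h.w_nonneg hβ i j)

lemma muij_le (i j : Fin n) : muij α w i j ≤ pn α n := by
  have h1 := h.w_le_one i j
  have h0 := pn_nonneg α n
  calc muij α w i j = pn α n * w i j := rfl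
    _ ≤ pn α n * 1 := mul_le_mul_of_nonneg_left h1 h0
    _ = pn α n := mul_one _

lemma le_muij (hβ : 0 < β) {i j : Fin n} (hij : i ≠ j) : β * pn α n ≤ muij α w i j := by
  have h1 := (h.wMem i j hij).1
  calc β * pn α n = pn α n * β := mul_comm _ _
    _ ≤ pn α n * w i j := mul_le_mul_of_nonneg_left h1 (pn_nonneg α n)
    _ = muij α w i j := rfl

lemma mui_le (i : Fin n) : mui α w i ≤ (n : ℝ) * pn α n := by
  calc mui α w i ≤ ∑ _j : Fin n, pn α n := Finset.sum_le_sum fun j _ => h.muij_le i j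
    _ = (n : ℝ) * pn α n := by
        simp [Finset.sum_const, Finset.card_univ, nsmul_eq_mul]

lemma le_mui (hβ : 0 < β) (hn : 2 ≤ n) (i : Fin n) :
    (n : ℝ) / 2 * (β * pn α n) ≤ mui α w i := by
  classical
  have step : ∀ j : Fin n, (if j = i then 0 else β * pn α n) ≤ muij α w i j := by
    intro j
    by_cases hj : j = i
    · simpa [hj] using h.muij_nonneg hβ i i
    · simpa [hj] using h.le_muij hβ (Ne.symm hj)
  have h1 : ∑ j : Fin n, (if j = i then (0:ℝ) else β * pn α n) ≤ mui α w i :=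
    Finset.sum_le_sum fun j _ => step j
  have h2 : ∑ j : Fin n, (if j = i then (0:ℝ) else β * pn α n)
      = ((n - 1 : ℕ) : ℝ) * (β * pn α n) := by
    calc ∑ j : Fin n, (if j = i then (0:ℝ) else β * pn α n)
        = (if i = i then (0:ℝ) else β * pn α n)
          + ∑ j ∈ Finset.univ.erase i, (if j = i then (0:ℝ) else β * pn α n) :=
          (Finset.add_sum_erase _ _ (Finset.mem_univ i)).symm
      _ = ∑ j ∈ Finset.univ.erase i, (β * pn α n) := by
          rw [if_pos rfl, zero_add]
          exact Finset.sum_congr rfl fun j hj => if_neg (Finset.ne_of_mem_erase hj)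
      _ = ((n - 1 : ℕ) : ℝ) * (β * pn α n) := by
          rw [Finset.sum_const, Finset.card_erase_of_mem (Finset.mem_univ i),
            Finset.card_univ, Fintype.card_fin, nsmul_eq_mul]
  have h3 : (n : ℝ) / 2 ≤ ((n - 1 : ℕ) : ℝ) := by
    rw [Nat.cast_sub (by omega : 1 ≤ n)]
    have : (2 : ℝ) ≤ (n : ℝ) := by exact_mod_cast hn
    push_cast
    linarith
  have h4 : 0 ≤ β * pn α n := mul_nonneg hβ.le (pn_nonneg α n)
  calc (n : ℝ) / 2 * (β * pn α n) ≤ ((n - 1 : ℕ) : ℝ) * (β * pn α n) :=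
        mul_le_mul_of_nonneg_right h3 h4
    _ = ∑ j : Fin n, (if j = i then (0:ℝ) else β * pn α n) := h2.symm
    _ ≤ mui α w i := h1

lemma mui_pos (hβ : 0 < β) (hn : 2 ≤ n) (i : Fin n) : 0 < mui α w i :=
  lt_of_lt_of_le (by
    have hp := pn_pos α (by omega : 0 < n)
    have : (0:ℝ) < (n:ℝ) := by exact_mod_cast (by omega : 0 < n)
    positivity) (h.le_mui hβ hn i)

lemma measurableSet_eq_one (i j : Fin n) : MeasurableSet {ω | A i j ω = 1} :=
  h.meas i j (measurableSet_singleton 1)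

lemma A_eq_indicator (i j : Fin n) :
    A i j = Set.indicator {ω | A i j ω = 1} (fun _ => (1:ℝ)) := by
  funext ω
  rcases h.aVal i j ω with h0 | h1
  · simp [Set.indicator_apply, Set.mem_setOf_eq, h0]
  · simp [Set.indicator_apply, Set.mem_setOf_eq, h1]

lemma integrable_A (i j : Fin n) : Integrable (A i j) volume := by
  haveI := h.isProb
  rw [h.A_eq_indicator i j]
  exact (integrable_const (1:ℝ)).indicator (h.measurableSet_eq_one i j)

lemma integral_A (hβ : 0 < β) {i j : Fin n} (hij : i ≠ j) :
    ∫ ω, A i j ω = muij α w i j := by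
  haveI := h.isProb
  rw [show (fun ω => A i j ω) = A i j from rfl, h.A_eq_indicator i j,
    MeasureTheory.integral_indicator_const (1:ℝ) (h.measurableSet_eq_one i j),
    measureReal_def, h.aBern i j hij, smul_eq_mul, mul_one]
  exact ENNReal.toReal_ofReal (h.muij_nonneg hβ i j)

lemma measurable_abar (i j : Fin n) : Measurable (abar α w A i j) :=
  (h.meas i j).sub measurable_const

lemma abs_abar_le (hβ : 0 < β) (hp1 : pn α n ≤ 1) (i j : Fin n) (ω : Ω) :
    |abar α w A i j ω| ≤ 1 := by
  have h0 := h.muij_nonneg hβ i j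
  have h1 : muij α w i j ≤ 1 := le_trans (h.muij_le i j) hp1
  simp only [abar]
  rcases h.aVal i j ω with hv | hv <;> rw [hv, abs_le] <;> constructor <;> linarith

lemma integral_abar (hβ : 0 < β) {i j : Fin n} (hij : i ≠ j) :
    ∫ ω, abar α w A i j ω = 0 := by
  haveI := h.isProb
  simp only [abar]
  rw [integral_sub (h.integrable_A i j) (integrable_const _), h.integral_A hβ hij,
    integral_const]
  simp

lemma integral_abar_sq (hβ : 0 < β) {i j : Fin n} (hij : i ≠ j) :
    ∫ ω, abar α w A i j ω ^ 2 = muij α w i j * (1 - muij α w i j) := by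
  haveI := h.isProb
  have hpt : ∀ ω, abar α w A i j ω ^ 2
      = (1 - 2 * muij α w i j) * A i j ω + muij α w i j ^ 2 := by
    intro ω
    simp only [abar]
    rcases h.aVal i j ω with hv | hv <;> rw [hv] <;> ring
  calc ∫ ω, abar α w A i j ω ^ 2
      = ∫ ω, ((1 - 2 * muij α w i j) * A i j ω + muij α w i j ^ 2) :=
        integral_congr_ae (Filter.Eventually.of_forall hpt)
    _ = (1 - 2 * muij α w i j) * (∫ ω, A i j ω) + muij α w i j ^ 2 := by
        rw [integral_add ((h.integrable_A i j).const_mul _) (integrable_const _),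
          integral_const_mul, integral_const]
        simp
    _ = muij α w i j * (1 - muij α w i j) := by
        rw [h.integral_A hβ hij]; ring

end IsHetRG

lemma integrable_of_bdd [IsFiniteMeasure (volume : Measure Ω)] {f : Ω → ℝ}
    (hm : Measurable f) {C : ℝ} (hb : ∀ ω, |f ω| ≤ C) : Integrable f volume :=
  ⟨hm.aestronglyMeasurable, MeasureTheory.HasFiniteIntegral.of_bounded (C := C)
    (Filter.Eventually.of_forall fun ω => by simpa [Real.norm_eq_abs] using hb ω)⟩

lemma indepFun_mul_triple {ι : Type} {Y : ι → Ω → ℝ}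
    (hInd : iIndepFun Y volume)
    (hm : ∀ e, Measurable (Y e)) {e a b c : ι} (hea : e ≠ a) (heb : e ≠ b) (hec : e ≠ c) :
    IndepFun (Y e) (fun ω => Y a ω * Y b ω * Y c ω) volume := by
  classical
  have hd : Disjoint ({e} : Finset ι) ({a, b, c} : Finset ι) := by
    simp [Finset.disjoint_left, hea, heb, hec]
  have h1 := hInd.indepFun_finset {e} {a, b, c} hd hm
  have hma : a ∈ ({a, b, c} : Finset ι) := by simp
  have hmb : b ∈ ({a, b, c} : Finset ι) := by simp
  have hmc : c ∈ ({a, b, c} : Finset ι) := by simp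
  have hφ : Measurable fun x : ({e} : Finset ι) → ℝ =>
      x ⟨e, Finset.mem_singleton_self e⟩ := measurable_pi_apply _
  have hψ : Measurable fun x : ({a, b, c} : Finset ι) → ℝ =>
      x ⟨a, hma⟩ * x ⟨b, hmb⟩ * x ⟨c, hmc⟩ := by
    exact ((measurable_pi_apply (⟨a, hma⟩ : ({a, b, c} : Finset ι))).mul
      (measurable_pi_apply (⟨b, hmb⟩ : ({a, b, c} : Finset ι)))).mul
      (measurable_pi_apply (⟨c, hmc⟩ : ({a, b, c} : Finset ι)))
  exact h1.comp hφ hψ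

lemma integral_mul_pair_eq_zero {ι : Type} {Y : ι → Ω → ℝ}
    (hInd : iIndepFun Y volume)
    (hm : ∀ e, Measurable (Y e)) (hz : ∀ e, ∫ ω, Y e ω = 0)
    {e f : ι} (hef : e ≠ f) :
    ∫ ω, Y e ω * Y f ω = 0 := by
  have h2 := (hInd.indepFun hef).integral_mul_eq_mul_integral (hm e).aestronglyMeasurable
    (hm f).aestronglyMeasurable
  rw [show (∫ ω, Y e ω * Y f ω) = ∫ ω, (Y e * Y f) ω from rfl,
    show (∫ ω, (Y e * Y f) ω) = MeasureTheory.integral volume (Y e * Y f) from rfl, h2,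
    show MeasureTheory.integral volume (Y e) = 0 from hz e, zero_mul]

lemma integral_mul_four_eq_zero {ι : Type} {Y : ι → Ω → ℝ}
    (hInd : iIndepFun Y volume)
    (hm : ∀ e, Measurable (Y e)) (hz : ∀ e, ∫ ω, Y e ω = 0)
    {e a b c : ι} (hea : e ≠ a) (heb : e ≠ b) (hec : e ≠ c) :
    ∫ ω, Y e ω * Y a ω * Y b ω * Y c ω = 0 := by
  have h1 := indepFun_mul_triple hInd hm hea heb hec
  have h2 := h1.integral_mul_eq_mul_integral (hm e).aestronglyMeasurable
    (((hm a).mul (hm b)).mul (hm c)).aestronglyMeasurable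
  have h3 : (fun ω => Y e ω * Y a ω * Y b ω * Y c ω)
      = (Y e * fun ω => Y a ω * Y b ω * Y c ω) := by
    funext ω; simp only [Pi.mul_apply]; ring
  rw [show (∫ ω, Y e ω * Y a ω * Y b ω * Y c ω)
      = MeasureTheory.integral volume (fun ω => Y e ω * Y a ω * Y b ω * Y c ω) from rfl,
    h3, h2, show MeasureTheory.integral volume (Y e) = 0 from hz e, zero_mul]

lemma integral_mul_sq_sq {ι : Type} {Y : ι → Ω → ℝ}
    (hInd : iIndepFun Y volume)
    (hm : ∀ e, Measurable (Y e)) {e f : ι} (hef : e ≠ f) :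
    ∫ ω, Y e ω ^ 2 * Y f ω ^ 2 = (∫ ω, Y e ω ^ 2) * ∫ ω, Y f ω ^ 2 := by
  have h1 : IndepFun (fun ω => Y e ω ^ 2) (fun ω => Y f ω ^ 2) volume :=
    (hInd.indepFun hef).comp (φ := fun x : ℝ => x ^ 2) (ψ := fun x : ℝ => x ^ 2)
      (measurable_id.pow_const 2) (measurable_id.pow_const 2)
  have h2 := h1.integral_mul_eq_mul_integral ((hm e).pow_const 2).aestronglyMeasurable
    ((hm f).pow_const 2).aestronglyMeasurable
  exact h2

lemma abar_iIndep (h : IsHetRG α β n w A) :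
    iIndepFun
      (fun e : {p : Fin n × Fin n // p.1 < p.2} => abar α w A e.1.1 e.1.2) volume := by
  have := h.aIndep.comp (fun e => fun x : ℝ => x - muij α w e.1.1 e.1.2)
    (fun e => measurable_id.sub_const _)
  exact this

lemma integral_sum_sq {P : Type} [Fintype P] [IsFiniteMeasure (volume : Measure Ω)]
    {f : P → Ω → ℝ} (hmeas : ∀ p, Measurable (f p)) {C : P → ℝ}
    (hb : ∀ p ω, |f p ω| ≤ C p) :
    ∫ ω, (∑ p, f p ω) ^ 2 = ∑ p, ∑ q, ∫ ω, f p ω * f q ω := by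
  have hint : ∀ p q : P, Integrable (fun ω => f p ω * f q ω) volume := by
    intro p q
    refine integrable_of_bdd ((hmeas p).mul (hmeas q)) (C := C p * C q) fun ω => ?_
    rw [abs_mul]
    exact mul_le_mul (hb p ω) (hb q ω) (abs_nonneg _)
      (le_trans (abs_nonneg _) (hb p ω))
  calc ∫ ω, (∑ p, f p ω) ^ 2
      = ∫ ω, ∑ p, ∑ q, f p ω * f q ω := by
        refine integral_congr_ae (Filter.Eventually.of_forall fun ω => ?_)
        show (∑ p, f p ω) ^ 2 = ∑ p, ∑ q, f p ω * f q ω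
        rw [sq, Finset.sum_mul_sum]
    _ = ∑ p, ∑ q, ∫ ω, f p ω * f q ω := by
        rw [MeasureTheory.integral_finset_sum _
          (fun p _ => integrable_finset_sum _ fun q _ => hint p q)]
        exact Finset.sum_congr rfl fun p _ =>
          MeasureTheory.integral_finset_sum _ fun q _ => hint p q

lemma part1_formula (h : IsHetRG α β n w A) (hβ : 0 < β) (hp1 : pn α n ≤ 1) :
    ∫ ω, (∑ i, ∑ j, ∑ k, (if i < j ∧ j < k then
        abar α w A i j ω * muij α w j k * muij α w k i /
          (mui α w i * mui α w j * mui α w k) else 0)) ^ 2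
    = ∑ i, ∑ j, if i < j then
        (∑ k, if j < k then muij α w j k * muij α w k i /
          (mui α w i * mui α w j * mui α w k) else 0) ^ 2
        * (muij α w i j * (1 - muij α w i j)) else 0 := by
  classical
  haveI := h.isProb
  set co : Fin n × Fin n → ℝ := fun p => if p.1 < p.2 then
    (∑ k, if p.2 < k then muij α w p.2 k * muij α w k p.1 /
      (mui α w p.1 * mui α w p.2 * mui α w k) else 0) else 0 with hco
  have hX : ∀ ω, (∑ i, ∑ j, ∑ k, (if i < j ∧ j < k then
        abar α w A i j ω * muij α w j k * muij α w k i /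
          (mui α w i * mui α w j * mui α w k) else 0))
      = ∑ p : Fin n × Fin n, co p * abar α w A p.1 p.2 ω := by
    intro ω
    rw [Fintype.sum_prod_type]
    refine Finset.sum_congr rfl fun i _ => Finset.sum_congr rfl fun j _ => ?_
    by_cases hij : i < j
    · show _ = co (i, j) * abar α w A i j ω
      rw [hco]
      simp only [hij, if_true]
      rw [Finset.sum_mul]
      refine Finset.sum_congr rfl fun k _ => ?_
      by_cases hk : j < k
      · simp only [hij, hk, true_and, if_true]; ring
      · simp [hij, hk]
    · show _ = co (i, j) * abar α w A i j ω
      rw [hco]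
      simp [hij]
  have hmf : ∀ p : Fin n × Fin n, Measurable (fun ω => co p * abar α w A p.1 p.2 ω) :=
    fun p => (h.measurable_abar p.1 p.2).const_mul _
  have hbf : ∀ (p : Fin n × Fin n) (ω : Ω), |co p * abar α w A p.1 p.2 ω| ≤ |co p| := by
    intro p ω
    rw [abs_mul]
    calc |co p| * |abar α w A p.1 p.2 ω| ≤ |co p| * 1 :=
          mul_le_mul_of_nonneg_left (h.abs_abar_le hβ hp1 p.1 p.2 ω) (abs_nonneg _)
      _ = |co p| := mul_one _
  calc ∫ ω, (∑ i, ∑ j, ∑ k, (if i < j ∧ j < k then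
        abar α w A i j ω * muij α w j k * muij α w k i /
          (mui α w i * mui α w j * mui α w k) else 0)) ^ 2
      = ∫ ω, (∑ p : Fin n × Fin n, co p * abar α w A p.1 p.2 ω) ^ 2 :=
        integral_congr_ae (Filter.Eventually.of_forall fun ω => congrArg (· ^ 2) (hX ω))
    _ = ∑ p : Fin n × Fin n, ∑ q : Fin n × Fin n,
        ∫ ω, (co p * abar α w A p.1 p.2 ω) * (co q * abar α w A q.1 q.2 ω) :=
        integral_sum_sq hmf hbf
    _ = ∑ p : Fin n × Fin n, co p ^ 2 * (muij α w p.1 p.2 * (1 - muij α w p.1 p.2)) := by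
        refine Finset.sum_congr rfl fun p _ => ?_
        rw [Finset.sum_eq_single p]
        · by_cases hp : p.1 < p.2
          · have : ∫ ω, (co p * abar α w A p.1 p.2 ω) * (co p * abar α w A p.1 p.2 ω)
                = co p ^ 2 * ∫ ω, abar α w A p.1 p.2 ω ^ 2 := by
              rw [show (fun ω => (co p * abar α w A p.1 p.2 ω) * (co p * abar α w A p.1 p.2 ω))
                  = fun ω => co p ^ 2 * abar α w A p.1 p.2 ω ^ 2 from funext fun ω => by ring]
              exact integral_const_mul _ _
            rw [this, h.integral_abar_sq hβ (ne_of_lt hp)]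
          · have hz : co p = 0 := by rw [hco]; simp [hp]
            simp [hz]
        · intro q _ hq
          by_cases hp : p.1 < p.2
          · by_cases hq2 : q.1 < q.2
            · have hne : (⟨p, hp⟩ : {r : Fin n × Fin n // r.1 < r.2})
                  ≠ ⟨q, hq2⟩ := by
                intro hh
                exact hq (congrArg Subtype.val hh).symm
              have hzero : ∫ ω, abar α w A p.1 p.2 ω * abar α w A q.1 q.2 ω = 0 :=
                integral_mul_pair_eq_zero (abar_iIndep h)
                  (fun e => h.measurable_abar e.1.1 e.1.2)
                  (fun e => h.integral_abar hβ (ne_of_lt e.2)) hne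
              have : ∫ ω, (co p * abar α w A p.1 p.2 ω) * (co q * abar α w A q.1 q.2 ω)
                  = (co p * co q) * ∫ ω, abar α w A p.1 p.2 ω * abar α w A q.1 q.2 ω := by
                rw [show (fun ω => (co p * abar α w A p.1 p.2 ω) * (co q * abar α w A q.1 q.2 ω))
                    = fun ω => (co p * co q) * (abar α w A p.1 p.2 ω * abar α w A q.1 q.2 ω)
                    from funext fun ω => by ring]
                exact integral_const_mul _ _
              rw [this, hzero, mul_zero]
            · have hz : co q = 0 := by rw [hco]; simp [hq2]
              simp [hz]
          · have hz : co p = 0 := by rw [hco]; simp [hp]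
            simp [hz]
        · intro hn'; exact absurd (Finset.mem_univ p) hn'
    _ = ∑ i, ∑ j, if i < j then
        (∑ k, if j < k then muij α w j k * muij α w k i /
          (mui α w i * mui α w j * mui α w k) else 0) ^ 2
        * (muij α w i j * (1 - muij α w i j)) else 0 := by
        rw [Fintype.sum_prod_type]
        refine Finset.sum_congr rfl fun i _ => Finset.sum_congr rfl fun j _ => ?_
        by_cases hij : i < j
        · rw [hco]; simp [hij]
        · rw [hco]; simp [hij]

lemma four_edge_cases {a b c a' b' c' : ℕ} (h1 : a < b) (h2 : b < c) (h1' : a' < b')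
    (h2' : b' < c') (hne : ¬(a = a' ∧ b = b' ∧ c = c')) :
    (¬(a = b ∧ b = c) ∧ ¬(a = a' ∧ b = b') ∧ ¬(a = b' ∧ b = c')) ∨
    (¬(b = a ∧ c = b) ∧ ¬(b = a' ∧ c = b') ∧ ¬(b = b' ∧ c = c')) := by omega

lemma edge_ne {n : ℕ} {x y x' y' : Fin n} (hxy : x < y) (hxy' : x' < y')
    (hne : ¬(x.val = x'.val ∧ y.val = y'.val)) :
    (⟨(x, y), hxy⟩ : {p : Fin n × Fin n // p.1 < p.2}) ≠ ⟨(x', y'), hxy'⟩ := by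
  intro heq
  have h1 : (x, y) = (x', y') := congrArg Subtype.val heq
  rw [Prod.mk.injEq] at h1
  exact hne ⟨congrArg Fin.val h1.1, congrArg Fin.val h1.2⟩

lemma part2_formula (h : IsHetRG α β n w A) (hβ : 0 < β) (hp1 : pn α n ≤ 1) :
    ∫ ω, (∑ i, ∑ j, ∑ k, (if i < j ∧ j < k then
        abar α w A i j ω * abar α w A j k ω * muij α w k i /
          (mui α w i * mui α w j * mui α w k) else 0)) ^ 2
    = ∑ i, ∑ j, ∑ k, if i < j ∧ j < k then
        (muij α w k i / (mui α w i * mui α w j * mui α w k)) ^ 2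
        * ((muij α w i j * (1 - muij α w i j)) * (muij α w j k * (1 - muij α w j k)))
        else 0 := by
  classical
  haveI := h.isProb
  set co : Fin n × Fin n × Fin n → ℝ := fun t => if t.1 < t.2.1 ∧ t.2.1 < t.2.2 then
    muij α w t.2.2 t.1 / (mui α w t.1 * mui α w t.2.1 * mui α w t.2.2) else 0 with hco
  set Y : {p : Fin n × Fin n // p.1 < p.2} → Ω → ℝ :=
    fun e ω => abar α w A e.1.1 e.1.2 ω with hY
  have hYind : iIndepFun Y volume := abar_iIndep h
  have hYmeas : ∀ e, Measurable (Y e) := fun e => h.measurable_abar e.1.1 e.1.2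
  have hYzero : ∀ e, ∫ ω, Y e ω = 0 := fun e => h.integral_abar hβ (ne_of_lt e.2)
  have hX : ∀ ω, (∑ i, ∑ j, ∑ k, (if i < j ∧ j < k then
        abar α w A i j ω * abar α w A j k ω * muij α w k i /
          (mui α w i * mui α w j * mui α w k) else 0))
      = ∑ t : Fin n × Fin n × Fin n,
          co t * (abar α w A t.1 t.2.1 ω * abar α w A t.2.1 t.2.2 ω) := by
    intro ω
    rw [Fintype.sum_prod_type]
    refine Finset.sum_congr rfl fun i _ => ?_
    rw [Fintype.sum_prod_type]
    refine Finset.sum_congr rfl fun j _ => Finset.sum_congr rfl fun k _ => ?_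
    show _ = co (i, j, k) * (abar α w A i j ω * abar α w A j k ω)
    simp only [hco]
    by_cases hc : i < j ∧ j < k
    · rw [if_pos hc, if_pos hc]; ring
    · rw [if_neg hc, if_neg hc, zero_mul]
  have hmf : ∀ t : Fin n × Fin n × Fin n,
      Measurable (fun ω => co t * (abar α w A t.1 t.2.1 ω * abar α w A t.2.1 t.2.2 ω)) :=
    fun t => ((h.measurable_abar t.1 t.2.1).mul (h.measurable_abar t.2.1 t.2.2)).const_mul _
  have hbf : ∀ (t : Fin n × Fin n × Fin n) (ω : Ω),
      |co t * (abar α w A t.1 t.2.1 ω * abar α w A t.2.1 t.2.2 ω)| ≤ |co t| := by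
    intro t ω
    rw [abs_mul, abs_mul]
    calc |co t| * (|abar α w A t.1 t.2.1 ω| * |abar α w A t.2.1 t.2.2 ω|)
        ≤ |co t| * (1 * 1) := by
          refine mul_le_mul_of_nonneg_left ?_ (abs_nonneg _)
          exact mul_le_mul (h.abs_abar_le hβ hp1 _ _ ω) (h.abs_abar_le hβ hp1 _ _ ω)
            (abs_nonneg _) zero_le_one
      _ = |co t| := by ring
  calc ∫ ω, (∑ i, ∑ j, ∑ k, (if i < j ∧ j < k then
        abar α w A i j ω * abar α w A j k ω * muij α w k i /
          (mui α w i * mui α w j * mui α w k) else 0)) ^ 2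
      = ∫ ω, (∑ t : Fin n × Fin n × Fin n,
          co t * (abar α w A t.1 t.2.1 ω * abar α w A t.2.1 t.2.2 ω)) ^ 2 :=
        integral_congr_ae (Filter.Eventually.of_forall fun ω => congrArg (· ^ 2) (hX ω))
    _ = ∑ t : Fin n × Fin n × Fin n, ∑ q : Fin n × Fin n × Fin n,
        ∫ ω, (co t * (abar α w A t.1 t.2.1 ω * abar α w A t.2.1 t.2.2 ω))
          * (co q * (abar α w A q.1 q.2.1 ω * abar α w A q.2.1 q.2.2 ω)) :=
        integral_sum_sq hmf hbf
    _ = ∑ t : Fin n × Fin n × Fin n, co t ^ 2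
        * ((muij α w t.1 t.2.1 * (1 - muij α w t.1 t.2.1))
          * (muij α w t.2.1 t.2.2 * (1 - muij α w t.2.1 t.2.2))) := by
        refine Finset.sum_congr rfl fun t _ => ?_
        rw [Finset.sum_eq_single t]
        · by_cases ht : t.1 < t.2.1 ∧ t.2.1 < t.2.2
          · have e1 : {p : Fin n × Fin n // p.1 < p.2} := ⟨(t.1, t.2.1), ht.1⟩
            have hne12 : (⟨(t.1, t.2.1), ht.1⟩ : {p : Fin n × Fin n // p.1 < p.2})
                ≠ ⟨(t.2.1, t.2.2), ht.2⟩ := by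
              refine edge_ne ht.1 ht.2 ?_
              have := ht.1
              rw [Fin.lt_def] at this
              omega
            have hsq : ∫ ω, abar α w A t.1 t.2.1 ω ^ 2 * abar α w A t.2.1 t.2.2 ω ^ 2
                = (muij α w t.1 t.2.1 * (1 - muij α w t.1 t.2.1))
                  * (muij α w t.2.1 t.2.2 * (1 - muij α w t.2.1 t.2.2)) := by
              have := integral_mul_sq_sq hYind hYmeas hne12
              rw [hY] at this
              simp only at this
              rw [this, h.integral_abar_sq hβ (ne_of_lt ht.1),
                h.integral_abar_sq hβ (ne_of_lt ht.2)]
            have hre : ∫ ω, (co t * (abar α w A t.1 t.2.1 ω * abar α w A t.2.1 t.2.2 ω))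
                * (co t * (abar α w A t.1 t.2.1 ω * abar α w A t.2.1 t.2.2 ω))
                = co t ^ 2 * ∫ ω, abar α w A t.1 t.2.1 ω ^ 2 * abar α w A t.2.1 t.2.2 ω ^ 2 := by
              rw [show (fun ω => (co t * (abar α w A t.1 t.2.1 ω * abar α w A t.2.1 t.2.2 ω))
                  * (co t * (abar α w A t.1 t.2.1 ω * abar α w A t.2.1 t.2.2 ω)))
                  = fun ω => co t ^ 2
                    * (abar α w A t.1 t.2.1 ω ^ 2 * abar α w A t.2.1 t.2.2 ω ^ 2)
                  from funext fun ω => by ring]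
              exact integral_const_mul _ _
            rw [hre, hsq]
          · have hz : co t = 0 := by rw [hco]; simp [ht]
            simp [hz]
        · intro q _ hqt
          by_cases ht : t.1 < t.2.1 ∧ t.2.1 < t.2.2
          · by_cases hq2 : q.1 < q.2.1 ∧ q.2.1 < q.2.2
            · have hvals : ¬(t.1.val = q.1.val ∧ t.2.1.val = q.2.1.val
                  ∧ t.2.2.val = q.2.2.val) := by
                intro hv
                apply hqt
                have e1 : q.1 = t.1 := Fin.ext hv.1.symm
                have e2 : q.2.1 = t.2.1 := Fin.ext hv.2.1.symm
                have e3 : q.2.2 = t.2.2 := Fin.ext hv.2.2.symm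
                exact Prod.ext e1 (Prod.ext e2 e3)
              have hlt1 := ht.1; have hlt2 := ht.2
              have hlt1' := hq2.1; have hlt2' := hq2.2
              rw [Fin.lt_def] at hlt1 hlt2 hlt1' hlt2'
              have hzero : ∫ ω, abar α w A t.1 t.2.1 ω * abar α w A t.2.1 t.2.2 ω
                  * abar α w A q.1 q.2.1 ω * abar α w A q.2.1 q.2.2 ω = 0 := by
                rcases four_edge_cases hlt1 hlt2 hlt1' hlt2' hvals with
                  ⟨hA1, hA2, hA3⟩ | ⟨hB1, hB2, hB3⟩
                · exact integral_mul_four_eq_zero hYind hYmeas hYzero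
                    (e := ⟨(t.1, t.2.1), ht.1⟩) (a := ⟨(t.2.1, t.2.2), ht.2⟩)
                    (b := ⟨(q.1, q.2.1), hq2.1⟩) (c := ⟨(q.2.1, q.2.2), hq2.2⟩)
                    (edge_ne ht.1 ht.2 hA1) (edge_ne ht.1 hq2.1 hA2)
                    (edge_ne ht.1 hq2.2 hA3)
                · have := integral_mul_four_eq_zero hYind hYmeas hYzero
                    (e := ⟨(t.2.1, t.2.2), ht.2⟩) (a := ⟨(t.1, t.2.1), ht.1⟩)
                    (b := ⟨(q.1, q.2.1), hq2.1⟩) (c := ⟨(q.2.1, q.2.2), hq2.2⟩)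
                    (edge_ne ht.2 ht.1 hB1) (edge_ne ht.2 hq2.1 hB2)
                    (edge_ne ht.2 hq2.2 hB3)
                  rw [hY] at this
                  simp only at this
                  rw [show (fun ω => abar α w A t.1 t.2.1 ω * abar α w A t.2.1 t.2.2 ω
                      * abar α w A q.1 q.2.1 ω * abar α w A q.2.1 q.2.2 ω)
                      = fun ω => abar α w A t.2.1 t.2.2 ω * abar α w A t.1 t.2.1 ω
                      * abar α w A q.1 q.2.1 ω * abar α w A q.2.1 q.2.2 ω
                      from funext fun ω => by ring]
                  exact this
              have hre : ∫ ω, (co t * (abar α w A t.1 t.2.1 ω * abar α w A t.2.1 t.2.2 ω))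
                  * (co q * (abar α w A q.1 q.2.1 ω * abar α w A q.2.1 q.2.2 ω))
                  = (co t * co q) * ∫ ω, abar α w A t.1 t.2.1 ω * abar α w A t.2.1 t.2.2 ω
                    * abar α w A q.1 q.2.1 ω * abar α w A q.2.1 q.2.2 ω := by
                rw [show (fun ω => (co t * (abar α w A t.1 t.2.1 ω * abar α w A t.2.1 t.2.2 ω))
                    * (co q * (abar α w A q.1 q.2.1 ω * abar α w A q.2.1 q.2.2 ω)))
                    = fun ω => (co t * co q) * (abar α w A t.1 t.2.1 ω
                      * abar α w A t.2.1 t.2.2 ω * abar α w A q.1 q.2.1 ω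
                      * abar α w A q.2.1 q.2.2 ω)
                    from funext fun ω => by ring]
                exact integral_const_mul _ _
              rw [hre, hzero, mul_zero]
            · have hz : co q = 0 := by rw [hco]; simp [hq2]
              simp [hz]
          · have hz : co t = 0 := by rw [hco]; simp [ht]
            simp [hz]
        · intro hn'; exact absurd (Finset.mem_univ t) hn'
    _ = ∑ i, ∑ j, ∑ k, if i < j ∧ j < k then
        (muij α w k i / (mui α w i * mui α w j * mui α w k)) ^ 2
        * ((muij α w i j * (1 - muij α w i j)) * (muij α w j k * (1 - muij α w j k)))
        else 0 := by
        rw [Fintype.sum_prod_type]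
        refine Finset.sum_congr rfl fun i _ => ?_
        rw [Fintype.sum_prod_type]
        refine Finset.sum_congr rfl fun j _ => Finset.sum_congr rfl fun k _ => ?_
        show co (i, j, k) ^ 2 * _ = _
        simp only [hco]
        by_cases hc : i < j ∧ j < k
        · rw [if_pos hc, if_pos hc]
        · rw [if_neg hc, if_neg hc]; simp

lemma sum_ite_lt_count (n q : ℕ) (hq : q ≤ n) (c : ℝ) :
    ∑ i : Fin n, (if i.val < q then c else 0) = (q : ℝ) * c := by
  rw [Fin.sum_univ_eq_sum_range (fun m => if m < q then c else 0) n, ← Finset.sum_filter]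
  have : (Finset.range n).filter (fun m => m < q) = Finset.range q := by
    ext m; simp only [Finset.mem_filter, Finset.mem_range]; omega
  rw [this, Finset.sum_const, Finset.card_range, nsmul_eq_mul]

lemma sum_ite_Ico_count (n a b : ℕ) (hb : b ≤ n) (c : ℝ) :
    ∑ i : Fin n, (if a ≤ i.val ∧ i.val < b then c else 0) = ((b - a : ℕ) : ℝ) * c := by
  rw [Fin.sum_univ_eq_sum_range (fun m => if a ≤ m ∧ m < b then c else 0) n,
    ← Finset.sum_filter]
  have : (Finset.range n).filter (fun m => a ≤ m ∧ m < b) = Finset.Ico a b := by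
    ext m; simp only [Finset.mem_filter, Finset.mem_range, Finset.mem_Ico]; omega
  rw [this, Finset.sum_const, Nat.card_Ico, nsmul_eq_mul]

lemma sum_ite_ge_count (n a : ℕ) (c : ℝ) :
    ∑ i : Fin n, (if a ≤ i.val then c else 0) = ((n - a : ℕ) : ℝ) * c := by
  rw [Fin.sum_univ_eq_sum_range (fun m => if a ≤ m then c else 0) n, ← Finset.sum_filter]
  have : (Finset.range n).filter (fun m => a ≤ m) = Finset.Ico a n := by
    ext m; simp only [Finset.mem_filter, Finset.mem_range, Finset.mem_Ico]; omega
  rw [this, Finset.sum_const, Nat.card_Ico, nsmul_eq_mul]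

section Bounds

variable (h : IsHetRG α β n w A) (hβ : β ∈ Set.Ioo (0:ℝ) 1) (hn : 9 ≤ n)
  (hp : pn α n ≤ 1/2)
include h hβ hn hp

lemma part1_lower :
    β ^ 5 / 2592 * (pn α n / ((n : ℝ) * pn α n) ^ 2)
      ≤ ∑ i, ∑ j, if i < j then
        (∑ k, if j < k then muij α w j k * muij α w k i /
          (mui α w i * mui α w j * mui α w k) else 0) ^ 2
        * (muij α w i j * (1 - muij α w i j)) else 0 := by
  classical
  obtain ⟨hb0, hb1⟩ := hβ
  set s := pn α n with hs
  have hn0 : 0 < n := by omega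
  have hn2 : 2 ≤ n := by omega
  have hs0 : 0 < s := pn_pos α hn0
  have hnR : (0:ℝ) < (n:ℝ) := by exact_mod_cast hn0
  set q := n / 3 with hq
  have hq3 : 3 * q ≤ n := by omega
  have hqn : q ≤ n := by omega
  have h2qn : 2 * q ≤ n := by omega
  have hDu : ∀ i : Fin n, mui α w i ≤ (n:ℝ) * s := h.mui_le
  have hD0 : (0:ℝ) < (n:ℝ) * s := by positivity
  set cmin : ℝ := (β * s) ^ 2 / ((n:ℝ) * s) ^ 3 with hcmin
  have hcmin0 : 0 ≤ cmin := by positivity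
  -- each admissible c is at least cmin
  have hc_low : ∀ i j k : Fin n, i ≠ j → j ≠ k → k ≠ i →
      cmin ≤ muij α w j k * muij α w k i / (mui α w i * mui α w j * mui α w k) := by
    intro i j k hij hjk hki
    have hnum : (β * s) ^ 2 ≤ muij α w j k * muij α w k i := by
      have h1 := h.le_muij hb0 hjk
      have h2 := h.le_muij hb0 hki
      have hbs : 0 ≤ β * s := by positivity
      calc (β * s) ^ 2 = (β * s) * (β * s) := sq (β*s) ▸ by ring
        _ ≤ muij α w j k * muij α w k i :=
          mul_le_mul h1 h2 hbs (le_trans hbs h1)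
    have hden0 : 0 < mui α w i * mui α w j * mui α w k := by
      have := h.mui_pos hb0 hn2
      exact mul_pos (mul_pos (this i) (this j)) (this k)
    have hden : mui α w i * mui α w j * mui α w k ≤ ((n:ℝ) * s) ^ 3 := by
      have hpos := h.mui_pos hb0 hn2
      calc mui α w i * mui α w j * mui α w k
          ≤ ((n:ℝ)*s) * ((n:ℝ)*s) * ((n:ℝ)*s) :=
            mul_le_mul (mul_le_mul (hDu i) (hDu j) (hpos j).le hD0.le) (hDu k)
              (hpos k).le (mul_nonneg hD0.le hD0.le)
        _ = ((n:ℝ) * s) ^ 3 := by ring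
    rw [hcmin]
    exact div_le_div₀ (le_trans (by positivity) hnum) hnum hden0 hden
  have hc_nonneg : ∀ i j k : Fin n,
      0 ≤ muij α w j k * muij α w k i / (mui α w i * mui α w j * mui α w k) := by
    intro i j k
    have p1 := h.mui_pos hb0 hn2 i
    have p2 := h.mui_pos hb0 hn2 j
    have p3 := h.mui_pos hb0 hn2 k
    have m1 := h.muij_nonneg hb0 j k
    have m2 := h.muij_nonneg hb0 k i
    positivity
  -- the inner sum is at least q * cmin on the good region
  have hC_low : ∀ i j : Fin n, i.val < q → q ≤ j.val → j.val < 2*q →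
      (q:ℝ) * cmin ≤ ∑ k, if j < k then muij α w j k * muij α w k i /
        (mui α w i * mui α w j * mui α w k) else 0 := by
    intro i j hiq hjq hj2q
    have step : ∀ k : Fin n, (if 2*q ≤ k.val then cmin else 0)
        ≤ if j < k then muij α w j k * muij α w k i /
          (mui α w i * mui α w j * mui α w k) else 0 := by
      intro k
      by_cases hk : 2*q ≤ k.val
      · have hjk : j < k := by rw [Fin.lt_def]; omega
        rw [if_pos hk, if_pos hjk]
        exact hc_low i j k (Fin.ne_of_val_ne (by omega)) (Fin.ne_of_val_ne (by omega))
          (Fin.ne_of_val_ne (by omega))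
      · rw [if_neg hk]
        by_cases hjk : j < k
        · rw [if_pos hjk]; exact hc_nonneg i j k
        · rw [if_neg hjk]
    calc (q:ℝ) * cmin ≤ ((n - 2*q : ℕ) : ℝ) * cmin := by
          have : (q:ℝ) ≤ ((n - 2*q : ℕ) : ℝ) := by exact_mod_cast (by omega : q ≤ n - 2*q)
          exact mul_le_mul_of_nonneg_right this hcmin0
      _ = ∑ k : Fin n, (if 2*q ≤ k.val then cmin else 0) := (sum_ite_ge_count n (2*q) cmin).symm
      _ ≤ _ := Finset.sum_le_sum fun k _ => step k
  -- variance lower bound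
  have hV_low : ∀ i j : Fin n, i ≠ j →
      β * s * (1/2) ≤ muij α w i j * (1 - muij α w i j) := by
    intro i j hij
    have h1 := h.le_muij hb0 hij
    have h2 : muij α w i j ≤ 1/2 := le_trans (h.muij_le i j) hp
    have h3 := h.muij_nonneg hb0 i j
    exact mul_le_mul h1 (by linarith) (by norm_num) (by linarith)
  have hV_nonneg : ∀ i j : Fin n, 0 ≤ muij α w i j * (1 - muij α w i j) := by
    intro i j
    have h2 : muij α w i j ≤ 1/2 := le_trans (h.muij_le i j) hp
    have h3 := h.muij_nonneg hb0 i j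
    nlinarith
  set L : ℝ := ((q:ℝ) * cmin) ^ 2 * (β * s * (1/2)) with hL
  have hL0 : 0 ≤ L := by positivity
  have main : ∑ i : Fin n, ∑ j : Fin n,
      (if i.val < q ∧ (q ≤ j.val ∧ j.val < 2*q) then L else 0)
      ≤ ∑ i, ∑ j, if i < j then
        (∑ k, if j < k then muij α w j k * muij α w k i /
          (mui α w i * mui α w j * mui α w k) else 0) ^ 2
        * (muij α w i j * (1 - muij α w i j)) else 0 := by
    refine Finset.sum_le_sum fun i _ => Finset.sum_le_sum fun j _ => ?_
    by_cases hc : i.val < q ∧ (q ≤ j.val ∧ j.val < 2*q)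
    · obtain ⟨h1, h2, h3⟩ := hc
      have hij : i < j := by rw [Fin.lt_def]; omega
      rw [if_pos ⟨h1, h2, h3⟩, if_pos hij]
      have hCl := hC_low i j h1 h2 h3
      have hq0 : (0:ℝ) ≤ (q:ℝ) * cmin := by positivity
      refine mul_le_mul (by
          calc ((q:ℝ) * cmin) ^ 2 ≤ (∑ k, if j < k then muij α w j k * muij α w k i /
              (mui α w i * mui α w j * mui α w k) else 0) ^ 2 :=
            pow_le_pow_left₀ hq0 hCl 2)
        (hV_low i j (ne_of_lt hij)) (by positivity) (by positivity)
    · rw [if_neg hc]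
      by_cases hij : i < j
      · rw [if_pos hij]
        have : 0 ≤ ∑ k, if j < k then muij α w j k * muij α w k i /
            (mui α w i * mui α w j * mui α w k) else 0 :=
          Finset.sum_nonneg fun k _ => by
            by_cases hjk : j < k
            · rw [if_pos hjk]; exact hc_nonneg i j k
            · rw [if_neg hjk]
        exact mul_nonneg (pow_nonneg this 2) (hV_nonneg i j)
      · rw [if_neg hij]
  have count : ∑ i : Fin n, ∑ j : Fin n,
      (if i.val < q ∧ (q ≤ j.val ∧ j.val < 2*q) then L else 0)
      = (q:ℝ) * ((q:ℝ) * L) := by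
    have inner : ∀ i : Fin n, (∑ j : Fin n,
        (if i.val < q ∧ (q ≤ j.val ∧ j.val < 2*q) then L else 0))
        = if i.val < q then (q:ℝ) * L else 0 := by
      intro i
      by_cases hP : i.val < q
      · rw [if_pos hP]
        have : ∀ j : Fin n, (if i.val < q ∧ (q ≤ j.val ∧ j.val < 2*q) then L else 0)
            = if q ≤ j.val ∧ j.val < 2*q then L else 0 := by
          intro j
          by_cases hQ : q ≤ j.val ∧ j.val < 2*q
          · rw [if_pos ⟨hP, hQ⟩, if_pos hQ]
          · rw [if_neg (by tauto), if_neg hQ]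
        rw [Finset.sum_congr rfl fun j _ => this j, sum_ite_Ico_count n q (2*q) h2qn L,
          show (2*q - q : ℕ) = q by omega]
      · rw [if_neg hP]
        refine Finset.sum_eq_zero fun j _ => if_neg (by tauto)
    rw [Finset.sum_congr rfl fun i _ => inner i, sum_ite_lt_count n q hqn ((q:ℝ) * L)]
  have hq6 : (n:ℝ) / 6 ≤ (q:ℝ) := by
    have : n ≤ 6 * q := by omega
    have h6 : (n:ℝ) ≤ 6 * (q:ℝ) := by exact_mod_cast this
    linarith
  have numchase : β ^ 5 / 2592 * (s / ((n : ℝ) * s) ^ 2) ≤ (q:ℝ) * ((q:ℝ) * L) := by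
    have hXpos : (0:ℝ) ≤ cmin ^ 2 * (β * s * (1/2)) := by positivity
    calc β ^ 5 / 2592 * (s / ((n : ℝ) * s) ^ 2)
        = ((n:ℝ)/6) ^ 4 * (cmin ^ 2 * (β * s * (1/2))) := by
          rw [hcmin]; field_simp; ring
      _ ≤ (q:ℝ) ^ 4 * (cmin ^ 2 * (β * s * (1/2))) :=
          mul_le_mul_of_nonneg_right (pow_le_pow_left₀ (by positivity) hq6 4) hXpos
      _ = (q:ℝ) * ((q:ℝ) * L) := by rw [hL]; ring
  calc β ^ 5 / 2592 * (s / ((n : ℝ) * s) ^ 2) ≤ (q:ℝ) * ((q:ℝ) * L) := numchase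
    _ = ∑ i : Fin n, ∑ j : Fin n,
        (if i.val < q ∧ (q ≤ j.val ∧ j.val < 2*q) then L else 0) := count.symm
    _ ≤ _ := main

lemma part1_upper :
    (∑ i, ∑ j, if i < j then
        (∑ k, if j < k then muij α w j k * muij α w k i /
          (mui α w i * mui α w j * mui α w k) else 0) ^ 2
        * (muij α w i j * (1 - muij α w i j)) else 0)
      ≤ 64 / β ^ 6 * (pn α n / ((n : ℝ) * pn α n) ^ 2) := by
  classical
  obtain ⟨hb0, hb1⟩ := hβ
  set s := pn α n with hs
  have hn0 : 0 < n := by omega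
  have hn2 : 2 ≤ n := by omega
  have hs0 : 0 < s := pn_pos α hn0
  have hnR : (0:ℝ) < (n:ℝ) := by exact_mod_cast hn0
  have hDl := h.le_mui hb0 hn2
  have hD0 : (0:ℝ) < (n:ℝ)/2 * (β * s) := by positivity
  set cmax : ℝ := s * s / ((n:ℝ)/2 * (β * s)) ^ 3 with hcmax
  have hcmax0 : 0 ≤ cmax := by positivity
  have hc_up : ∀ i j k : Fin n,
      muij α w j k * muij α w k i / (mui α w i * mui α w j * mui α w k) ≤ cmax := by
    intro i j k
    have hpos := h.mui_pos hb0 hn2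
    have hnum : muij α w j k * muij α w k i ≤ s * s :=
      mul_le_mul (h.muij_le j k) (h.muij_le k i) (h.muij_nonneg hb0 k i) hs0.le
    have hden : ((n:ℝ)/2 * (β * s)) ^ 3 ≤ mui α w i * mui α w j * mui α w k := by
      calc ((n:ℝ)/2 * (β * s)) ^ 3
          = ((n:ℝ)/2 * (β * s)) * ((n:ℝ)/2 * (β * s)) * ((n:ℝ)/2 * (β * s)) := by ring
        _ ≤ mui α w i * mui α w j * mui α w k :=
            mul_le_mul (mul_le_mul (hDl i) (hDl j) hD0.le (hpos i).le) (hDl k)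
              hD0.le (mul_nonneg (hpos i).le (hpos j).le)
    rw [hcmax]
    exact div_le_div₀ (by positivity)
      (le_trans hnum (le_refl _)) (by positivity) hden
  have hV_up : ∀ i j : Fin n, muij α w i j * (1 - muij α w i j) ≤ s := by
    intro i j
    have h1 := h.muij_le i j
    have h3 := h.muij_nonneg hb0 i j
    nlinarith
  set U : ℝ := ((n:ℝ) * cmax) ^ 2 * s with hU
  have hU0 : 0 ≤ U := by positivity
  have main : (∑ i, ∑ j, if i < j then
        (∑ k, if j < k then muij α w j k * muij α w k i /
          (mui α w i * mui α w j * mui α w k) else 0) ^ 2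
        * (muij α w i j * (1 - muij α w i j)) else 0)
      ≤ ∑ _i : Fin n, ∑ _j : Fin n, U := by
    refine Finset.sum_le_sum fun i _ => Finset.sum_le_sum fun j _ => ?_
    by_cases hij : i < j
    · rw [if_pos hij]
      have hC_up : (∑ k, if j < k then muij α w j k * muij α w k i /
          (mui α w i * mui α w j * mui α w k) else 0) ≤ (n:ℝ) * cmax := by
        calc (∑ k, if j < k then muij α w j k * muij α w k i /
            (mui α w i * mui α w j * mui α w k) else 0)
            ≤ ∑ _k : Fin n, cmax := Finset.sum_le_sum fun k _ => by
              by_cases hjk : j < k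
              · rw [if_pos hjk]; exact hc_up i j k
              · rw [if_neg hjk]; exact hcmax0
          _ = (n:ℝ) * cmax := by
              simp [Finset.sum_const, Finset.card_univ, nsmul_eq_mul]
      have hC0 : 0 ≤ ∑ k, if j < k then muij α w j k * muij α w k i /
          (mui α w i * mui α w j * mui α w k) else 0 := by
        refine Finset.sum_nonneg fun k _ => ?_
        by_cases hjk : j < k
        · rw [if_pos hjk]
          have p1 := h.mui_pos hb0 hn2 i
          have p2 := h.mui_pos hb0 hn2 j
          have p3 := h.mui_pos hb0 hn2 k
          have m1 := h.muij_nonneg hb0 j k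
          have m2 := h.muij_nonneg hb0 k i
          positivity
        · rw [if_neg hjk]
      have hVnn : 0 ≤ muij α w i j * (1 - muij α w i j) := by
        have h1 : muij α w i j ≤ 1/2 := le_trans (h.muij_le i j) hp
        have h3 := h.muij_nonneg hb0 i j
        nlinarith
      rw [hU]
      exact mul_le_mul (pow_le_pow_left₀ hC0 hC_up 2) (hV_up i j) hVnn (by positivity)
    · rw [if_neg hij]; exact hU0
  have count : ∑ _i : Fin n, ∑ _j : Fin n, U = (n:ℝ) * ((n:ℝ) * U) := by
    simp [Finset.sum_const, Finset.card_univ, nsmul_eq_mul]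
    try ring
  have final : (n:ℝ) * ((n:ℝ) * U) = 64 / β ^ 6 * (s / ((n : ℝ) * s) ^ 2) := by
    rw [hU, hcmax]; field_simp; ring
  calc (∑ i, ∑ j, if i < j then
        (∑ k, if j < k then muij α w j k * muij α w k i /
          (mui α w i * mui α w j * mui α w k) else 0) ^ 2
        * (muij α w i j * (1 - muij α w i j)) else 0)
      ≤ ∑ _i : Fin n, ∑ _j : Fin n, U := main
    _ = (n:ℝ) * ((n:ℝ) * U) := count
    _ = 64 / β ^ 6 * (s / ((n : ℝ) * s) ^ 2) := final

lemma part2_lower :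
    β ^ 4 / 864 * (pn α n / ((n : ℝ) * pn α n) ^ 3)
      ≤ ∑ i, ∑ j, ∑ k, if i < j ∧ j < k then
        (muij α w k i / (mui α w i * mui α w j * mui α w k)) ^ 2
        * ((muij α w i j * (1 - muij α w i j)) * (muij α w j k * (1 - muij α w j k)))
        else 0 := by
  classical
  obtain ⟨hb0, hb1⟩ := hβ
  set s := pn α n with hs
  have hn0 : 0 < n := by omega
  have hn2 : 2 ≤ n := by omega
  have hs0 : 0 < s := pn_pos α hn0
  have hnR : (0:ℝ) < (n:ℝ) := by exact_mod_cast hn0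
  set q := n / 3 with hq
  have hq3 : 3 * q ≤ n := by omega
  have hqn : q ≤ n := by omega
  have h2qn : 2 * q ≤ n := by omega
  have hDu : ∀ i : Fin n, mui α w i ≤ (n:ℝ) * s := h.mui_le
  have hD0 : (0:ℝ) < (n:ℝ) * s := by positivity
  set c2min : ℝ := β * s / ((n:ℝ) * s) ^ 3 with hc2min
  have hc2min0 : 0 ≤ c2min := by positivity
  have hc_low : ∀ i j k : Fin n, k ≠ i →
      c2min ≤ muij α w k i / (mui α w i * mui α w j * mui α w k) := by
    intro i j k hki
    have hnum := h.le_muij hb0 hki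
    have hpos := h.mui_pos hb0 hn2
    have hden0 : 0 < mui α w i * mui α w j * mui α w k :=
      mul_pos (mul_pos (hpos i) (hpos j)) (hpos k)
    have hden : mui α w i * mui α w j * mui α w k ≤ ((n:ℝ) * s) ^ 3 := by
      calc mui α w i * mui α w j * mui α w k
          ≤ ((n:ℝ)*s) * ((n:ℝ)*s) * ((n:ℝ)*s) :=
            mul_le_mul (mul_le_mul (hDu i) (hDu j) (hpos j).le hD0.le) (hDu k)
              (hpos k).le (mul_nonneg hD0.le hD0.le)
        _ = ((n:ℝ) * s) ^ 3 := by ring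
    rw [hc2min]
    exact div_le_div₀ (le_trans (by positivity) hnum) hnum hden0 hden
  have hc_nonneg : ∀ i j k : Fin n,
      0 ≤ muij α w k i / (mui α w i * mui α w j * mui α w k) := by
    intro i j k
    have p1 := h.mui_pos hb0 hn2 i
    have p2 := h.mui_pos hb0 hn2 j
    have p3 := h.mui_pos hb0 hn2 k
    have m2 := h.muij_nonneg hb0 k i
    positivity
  have hV_low : ∀ i j : Fin n, i ≠ j →
      β * s * (1/2) ≤ muij α w i j * (1 - muij α w i j) := by
    intro i j hij
    have h1 := h.le_muij hb0 hij
    have h2 : muij α w i j ≤ 1/2 := le_trans (h.muij_le i j) hp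
    have h3 := h.muij_nonneg hb0 i j
    exact mul_le_mul h1 (by linarith) (by norm_num) (by linarith)
  have hV_nonneg : ∀ i j : Fin n, 0 ≤ muij α w i j * (1 - muij α w i j) := by
    intro i j
    have h2 : muij α w i j ≤ 1/2 := le_trans (h.muij_le i j) hp
    have h3 := h.muij_nonneg hb0 i j
    nlinarith
  have hbs0 : (0:ℝ) ≤ β * s * (1/2) := by positivity
  set L : ℝ := c2min ^ 2 * ((β * s * (1/2)) * (β * s * (1/2))) with hL
  have hL0 : 0 ≤ L := by positivity
  have main : ∑ i : Fin n, ∑ j : Fin n, ∑ k : Fin n,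
      (if i.val < q ∧ ((q ≤ j.val ∧ j.val < 2*q) ∧ 2*q ≤ k.val) then L else 0)
      ≤ ∑ i, ∑ j, ∑ k, if i < j ∧ j < k then
        (muij α w k i / (mui α w i * mui α w j * mui α w k)) ^ 2
        * ((muij α w i j * (1 - muij α w i j)) * (muij α w j k * (1 - muij α w j k)))
        else 0 := by
    refine Finset.sum_le_sum fun i _ => Finset.sum_le_sum fun j _ =>
      Finset.sum_le_sum fun k _ => ?_
    by_cases hc : i.val < q ∧ ((q ≤ j.val ∧ j.val < 2*q) ∧ 2*q ≤ k.val)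
    · obtain ⟨h1, ⟨h2, h3⟩, h4⟩ := hc
      have hij : i < j := by rw [Fin.lt_def]; omega
      have hjk : j < k := by rw [Fin.lt_def]; omega
      rw [if_pos ⟨h1, ⟨h2, h3⟩, h4⟩, if_pos ⟨hij, hjk⟩]
      have hcl := hc_low i j k (Fin.ne_of_val_ne (by omega))
      rw [hL]
      refine mul_le_mul (pow_le_pow_left₀ hc2min0 hcl 2) ?_ ?_ ?_
      · exact mul_le_mul (hV_low i j (ne_of_lt hij)) (hV_low j k (ne_of_lt hjk))
          hbs0 (hV_nonneg i j)
      · positivity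
      · exact pow_nonneg (hc_nonneg i j k) 2
    · rw [if_neg hc]
      by_cases hijk : i < j ∧ j < k
      · rw [if_pos hijk]
        exact mul_nonneg (pow_nonneg (hc_nonneg i j k) 2)
          (mul_nonneg (hV_nonneg i j) (hV_nonneg j k))
      · rw [if_neg hijk]
  have count : ∑ i : Fin n, ∑ j : Fin n, ∑ k : Fin n,
      (if i.val < q ∧ ((q ≤ j.val ∧ j.val < 2*q) ∧ 2*q ≤ k.val) then L else 0)
      = (q:ℝ) * ((q:ℝ) * (((n - 2*q : ℕ) : ℝ) * L)) := by
    have inner2 : ∀ (i j : Fin n), (∑ k : Fin n,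
        (if i.val < q ∧ ((q ≤ j.val ∧ j.val < 2*q) ∧ 2*q ≤ k.val) then L else 0))
        = if i.val < q ∧ (q ≤ j.val ∧ j.val < 2*q) then ((n - 2*q : ℕ) : ℝ) * L else 0 := by
      intro i j
      by_cases hPQ : i.val < q ∧ (q ≤ j.val ∧ j.val < 2*q)
      · rw [if_pos hPQ]
        rw [Finset.sum_congr rfl fun k _ => show
            (if i.val < q ∧ ((q ≤ j.val ∧ j.val < 2*q) ∧ 2*q ≤ k.val) then L else 0)
            = if 2*q ≤ k.val then L else 0 by
          by_cases hR : 2*q ≤ k.val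
          · rw [if_pos ⟨hPQ.1, hPQ.2, hR⟩, if_pos hR]
          · rw [if_neg (by tauto), if_neg hR]]
        exact sum_ite_ge_count n (2*q) L
      · rw [if_neg hPQ]
        exact Finset.sum_eq_zero fun k _ => if_neg (by tauto)
    have inner1 : ∀ i : Fin n, (∑ j : Fin n, ∑ k : Fin n,
        (if i.val < q ∧ ((q ≤ j.val ∧ j.val < 2*q) ∧ 2*q ≤ k.val) then L else 0))
        = if i.val < q then (q:ℝ) * (((n - 2*q : ℕ) : ℝ) * L) else 0 := by
      intro i
      rw [Finset.sum_congr rfl fun j _ => inner2 i j]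
      by_cases hP : i.val < q
      · rw [if_pos hP]
        rw [Finset.sum_congr rfl fun j _ => show
            (if i.val < q ∧ (q ≤ j.val ∧ j.val < 2*q) then ((n - 2*q : ℕ) : ℝ) * L else 0)
            = if q ≤ j.val ∧ j.val < 2*q then ((n - 2*q : ℕ) : ℝ) * L else 0 by
          by_cases hQ : q ≤ j.val ∧ j.val < 2*q
          · rw [if_pos ⟨hP, hQ⟩, if_pos hQ]
          · rw [if_neg (by tauto), if_neg hQ]]
        rw [sum_ite_Ico_count n q (2*q) h2qn (((n - 2*q : ℕ) : ℝ) * L),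
          show (2*q - q : ℕ) = q by omega]
      · rw [if_neg hP]
        exact Finset.sum_eq_zero fun j _ => if_neg (by tauto)
    rw [Finset.sum_congr rfl fun i _ => inner1 i,
      sum_ite_lt_count n q hqn ((q:ℝ) * (((n - 2*q : ℕ) : ℝ) * L))]
  have hq6 : (n:ℝ) / 6 ≤ (q:ℝ) := by
    have : n ≤ 6 * q := by omega
    have h6 : (n:ℝ) ≤ 6 * (q:ℝ) := by exact_mod_cast this
    linarith
  have hq2q : (q:ℝ) ≤ ((n - 2*q : ℕ) : ℝ) := by exact_mod_cast (by omega : q ≤ n - 2*q)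
  have numchase : β ^ 4 / 864 * (s / ((n : ℝ) * s) ^ 3)
      ≤ (q:ℝ) * ((q:ℝ) * (((n - 2*q : ℕ) : ℝ) * L)) := by
    have hq0 : (0:ℝ) ≤ (q:ℝ) := Nat.cast_nonneg q
    calc β ^ 4 / 864 * (s / ((n : ℝ) * s) ^ 3)
        = ((n:ℝ)/6) ^ 3 * L := by
          rw [hL, hc2min]; field_simp; ring
      _ ≤ (q:ℝ) ^ 3 * L :=
          mul_le_mul_of_nonneg_right (pow_le_pow_left₀ (by positivity) hq6 3) hL0
      _ = (q:ℝ) * ((q:ℝ) * ((q:ℝ) * L)) := by ring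
      _ ≤ (q:ℝ) * ((q:ℝ) * (((n - 2*q : ℕ) : ℝ) * L)) := by
          refine mul_le_mul_of_nonneg_left (mul_le_mul_of_nonneg_left
            (mul_le_mul_of_nonneg_right hq2q hL0) hq0) hq0
  calc β ^ 4 / 864 * (s / ((n : ℝ) * s) ^ 3)
      ≤ (q:ℝ) * ((q:ℝ) * (((n - 2*q : ℕ) : ℝ) * L)) := numchase
    _ = ∑ i : Fin n, ∑ j : Fin n, ∑ k : Fin n,
        (if i.val < q ∧ ((q ≤ j.val ∧ j.val < 2*q) ∧ 2*q ≤ k.val) then L else 0) := count.symm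
    _ ≤ _ := main

lemma part2_upper :
    (∑ i, ∑ j, ∑ k, if i < j ∧ j < k then
        (muij α w k i / (mui α w i * mui α w j * mui α w k)) ^ 2
        * ((muij α w i j * (1 - muij α w i j)) * (muij α w j k * (1 - muij α w j k)))
        else 0)
      ≤ 64 / β ^ 6 * (pn α n / ((n : ℝ) * pn α n) ^ 3) := by
  classical
  obtain ⟨hb0, hb1⟩ := hβ
  set s := pn α n with hs
  have hn0 : 0 < n := by omega
  have hn2 : 2 ≤ n := by omega
  have hs0 : 0 < s := pn_pos α hn0
  have hnR : (0:ℝ) < (n:ℝ) := by exact_mod_cast hn0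
  have hDl := h.le_mui hb0 hn2
  have hD0 : (0:ℝ) < (n:ℝ)/2 * (β * s) := by positivity
  set c2max : ℝ := s / ((n:ℝ)/2 * (β * s)) ^ 3 with hc2max
  have hc2max0 : 0 ≤ c2max := by positivity
  have hc_up : ∀ i j k : Fin n,
      muij α w k i / (mui α w i * mui α w j * mui α w k) ≤ c2max := by
    intro i j k
    have hpos := h.mui_pos hb0 hn2
    have hnum : muij α w k i ≤ s := h.muij_le k i
    have hden : ((n:ℝ)/2 * (β * s)) ^ 3 ≤ mui α w i * mui α w j * mui α w k := by
      calc ((n:ℝ)/2 * (β * s)) ^ 3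
          = ((n:ℝ)/2 * (β * s)) * ((n:ℝ)/2 * (β * s)) * ((n:ℝ)/2 * (β * s)) := by ring
        _ ≤ mui α w i * mui α w j * mui α w k :=
            mul_le_mul (mul_le_mul (hDl i) (hDl j) hD0.le (hpos i).le) (hDl k)
              hD0.le (mul_nonneg (hpos i).le (hpos j).le)
    rw [hc2max]
    exact div_le_div₀ hs0.le hnum (by positivity) hden
  have hV_up : ∀ i j : Fin n, muij α w i j * (1 - muij α w i j) ≤ s := by
    intro i j
    have h1 := h.muij_le i j
    have h3 := h.muij_nonneg hb0 i j
    nlinarith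
  have hV_nonneg : ∀ i j : Fin n, 0 ≤ muij α w i j * (1 - muij α w i j) := by
    intro i j
    have h2 : muij α w i j ≤ 1/2 := le_trans (h.muij_le i j) hp
    have h3 := h.muij_nonneg hb0 i j
    nlinarith
  set U : ℝ := c2max ^ 2 * (s * s) with hU
  have hU0 : 0 ≤ U := by positivity
  have main : (∑ i, ∑ j, ∑ k, if i < j ∧ j < k then
        (muij α w k i / (mui α w i * mui α w j * mui α w k)) ^ 2
        * ((muij α w i j * (1 - muij α w i j)) * (muij α w j k * (1 - muij α w j k)))
        else 0)
      ≤ ∑ _i : Fin n, ∑ _j : Fin n, ∑ _k : Fin n, U := by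
    refine Finset.sum_le_sum fun i _ => Finset.sum_le_sum fun j _ =>
      Finset.sum_le_sum fun k _ => ?_
    by_cases hijk : i < j ∧ j < k
    · rw [if_pos hijk, hU]
      have hcn : 0 ≤ muij α w k i / (mui α w i * mui α w j * mui α w k) := by
        have p1 := h.mui_pos hb0 hn2 i
        have p2 := h.mui_pos hb0 hn2 j
        have p3 := h.mui_pos hb0 hn2 k
        have m2 := h.muij_nonneg hb0 k i
        positivity
      refine mul_le_mul (pow_le_pow_left₀ hcn (hc_up i j k) 2) ?_
        (mul_nonneg (hV_nonneg i j) (hV_nonneg j k)) (by positivity)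
      exact mul_le_mul (hV_up i j) (hV_up j k) (hV_nonneg j k) hs0.le
    · rw [if_neg hijk]; exact hU0
  have count : ∑ _i : Fin n, ∑ _j : Fin n, ∑ _k : Fin n, U
      = (n:ℝ) * ((n:ℝ) * ((n:ℝ) * U)) := by
    simp [Finset.sum_const, Finset.card_univ, nsmul_eq_mul]
    try ring
  have final : (n:ℝ) * ((n:ℝ) * ((n:ℝ) * U)) = 64 / β ^ 6 * (s / ((n : ℝ) * s) ^ 3) := by
    rw [hU, hc2max]; field_simp; ring
  calc (∑ i, ∑ j, ∑ k, if i < j ∧ j < k then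
        (muij α w k i / (mui α w i * mui α w j * mui α w k)) ^ 2
        * ((muij α w i j * (1 - muij α w i j)) * (muij α w j k * (1 - muij α w j k)))
        else 0)
      ≤ ∑ _i : Fin n, ∑ _j : Fin n, ∑ _k : Fin n, U := main
    _ = (n:ℝ) * ((n:ℝ) * ((n:ℝ) * U)) := count
    _ = 64 / β ^ 6 * (s / ((n : ℝ) * s) ^ 3) := final

end Bounds

end Aux

/-- `E[(∑_{i<j<k} Ā_{ij} μ_{jk} μ_{ki}/(μ_i μ_j μ_k))²] = Θ(p_n/(n p_n)²)`
and `E[(∑_{i<j<k} Ā_{ij} Ā_{jk} μ_{ki}/(μ_i μ_j μ_k))²] = Θ(p_n/(n p_n)³)`, uniformly over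
`n` and admissible weight arrays. -/
theorem normalized_triangle_terms_second_moments
    (α β : ℝ) (hα : α ∈ Set.Ioo (0 : ℝ) 1) (hβ : β ∈ Set.Ioo (0 : ℝ) 1) :
    (∃ c₁ c₂ : ℝ, 0 < c₁ ∧ 0 < c₂ ∧ ∃ N : ℕ, ∀ n ≥ N,
      ∀ (Ω : Type) [MeasureSpace Ω],
        ∀ (w : Fin n → Fin n → ℝ) (A : Fin n → Fin n → Ω → ℝ), IsHetRG α β n w A →
          c₁ * (pn α n / ((n : ℝ) * pn α n) ^ 2) ≤
            (∫ ω, (∑ i, ∑ j, ∑ k, (if i < j ∧ j < k then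
              abar α w A i j ω * muij α w j k * muij α w k i /
                (mui α w i * mui α w j * mui α w k) else 0)) ^ 2) ∧
          (∫ ω, (∑ i, ∑ j, ∑ k, (if i < j ∧ j < k then
              abar α w A i j ω * muij α w j k * muij α w k i /
                (mui α w i * mui α w j * mui α w k) else 0)) ^ 2) ≤
            c₂ * (pn α n / ((n : ℝ) * pn α n) ^ 2)) ∧
    (∃ c₁ c₂ : ℝ, 0 < c₁ ∧ 0 < c₂ ∧ ∃ N : ℕ, ∀ n ≥ N,
      ∀ (Ω : Type) [MeasureSpace Ω],
        ∀ (w : Fin n → Fin n → ℝ) (A : Fin n → Fin n → Ω → ℝ), IsHetRG α β n w A →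
          c₁ * (pn α n / ((n : ℝ) * pn α n) ^ 3) ≤
            (∫ ω, (∑ i, ∑ j, ∑ k, (if i < j ∧ j < k then
              abar α w A i j ω * abar α w A j k ω * muij α w k i /
                (mui α w i * mui α w j * mui α w k) else 0)) ^ 2) ∧
          (∫ ω, (∑ i, ∑ j, ∑ k, (if i < j ∧ j < k then
              abar α w A i j ω * abar α w A j k ω * muij α w k i /
                (mui α w i * mui α w j * mui α w k) else 0)) ^ 2) ≤
            c₂ * (pn α n / ((n : ℝ) * pn α n) ^ 3)) := by
  obtain ⟨hα0, hα1⟩ := hα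
  have hb0 : 0 < β := hβ.1
  have htend : Tendsto (fun n : ℕ => pn α n) atTop (𝓝 0) :=
    (tendsto_rpow_neg_atTop hα0).comp tendsto_natCast_atTop_atTop
  have hev : ∀ᶠ n in atTop, pn α n ≤ 1/2 :=
    (htend.eventually_lt_const (by norm_num : (0:ℝ) < 1/2)).mono fun n h => h.le
  obtain ⟨N₀, hN₀⟩ := Filter.eventually_atTop.mp hev
  constructor
  · refine ⟨β ^ 5 / 2592, 64 / β ^ 6, by positivity, by positivity, max N₀ 9, ?_⟩
    intro n hn Ω _ w A hH
    have h9 : 9 ≤ n := le_trans (le_max_right _ _) hn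
    have hp : pn α n ≤ 1/2 := hN₀ n (le_trans (le_max_left _ _) hn)
    have hp1 : pn α n ≤ 1 := by linarith
    rw [part1_formula hH hb0 hp1]
    exact ⟨part1_lower hH hβ h9 hp, part1_upper hH hβ h9 hp⟩
  · refine ⟨β ^ 4 / 864, 64 / β ^ 6, by positivity, by positivity, max N₀ 9, ?_⟩
    intro n hn Ω _ w A hH
    have h9 : 9 ≤ n := le_trans (le_max_right _ _) hn
    have hp : pn α n ≤ 1/2 := hN₀ n (le_trans (le_max_left _ _) hn)
    have hp1 : pn α n ≤ 1 := by linarith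
    rw [part2_formula hH hb0 hp1]
    exact ⟨part2_lower hH hβ h9 hp, part2_upper hH hβ h9 hp⟩

end HetRG
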